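/- For every natural number r ≥ 0 one has the inclusions of ideals γ·J_r ⊆ J_{r+1} ⊆ J_r in ℂ[α,β,γ]. -/

import Mathlib

/-!
Each generator of `J_{r+1}` is a `ℂ[α,β,γ]`-combination of those of `J_r`, which gives
`J_{r+1} ⊆ J_r`. Conversely `γ R¹_r = R³_{r+1}`, and for `r ≥ 1` the recursion can be solved for
`R²_r` and `R³_r` after multiplying by `γ`, because their coefficients `r²` and `2r/(r+1)` are
units of `ℂ`:
`r² γ R²_r = γ R¹_{r+1} - α R³_{r+1}` and `(2r/(r+1)) γ R³_r = γ R²_{r+1} - (β ± 8) R³_{r+1}`.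
For `r = 0` both `R²_0` and `R³_0` vanish.
-/

open MvPolynomial

/-- The triple (R¹_r, R²_r, R³_r) of polynomials in ℂ[α,β,γ] (α = X 0, β = X 1, γ = X 2). -/
noncomputable def Rr : ℕ → MvPolynomial (Fin 3) ℂ × MvPolynomial (Fin 3) ℂ × MvPolynomial (Fin 3) ℂ
  | 0 => (1, 0, 0)
  | (r + 1) =>
      (X 0 * (Rr r).1 + C ((r : ℂ) ^ 2) * (Rr r).2.1,
       (X 1 + C ((-1 : ℂ) ^ (r + 1) * 8)) * (Rr r).1 + C ((2 * r : ℂ) / (r + 1)) * (Rr r).2.2,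
       X 2 * (Rr r).1)

/-- The ideal J_r = (R¹_r, R²_r, R³_r) ⊆ ℂ[α,β,γ]. -/
noncomputable def Jr (r : ℕ) : Ideal (MvPolynomial (Fin 3) ℂ) :=
  Ideal.span {(Rr r).1, (Rr r).2.1, (Rr r).2.2}

lemma Ideal.mul_mem_of_mem_span {R : Type*} [CommSemiring R] {s : Set R} {I : Ideal R} {a p : R}
    (h : ∀ x ∈ s, a * x ∈ I) (hp : p ∈ Ideal.span s) : a * p ∈ I := by
  have hle : Ideal.span s ≤ Submodule.comap (LinearMap.mulLeft R a) I :=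
    Submodule.span_le.mpr h
  exact hle hp

lemma Rr_succ_fst (r : ℕ) : (Rr (r + 1)).1 = X 0 * (Rr r).1 + C ((r : ℂ) ^ 2) * (Rr r).2.1 := rfl

lemma Rr_succ_snd_fst (r : ℕ) : (Rr (r + 1)).2.1 =
    (X 1 + C ((-1 : ℂ) ^ (r + 1) * 8)) * (Rr r).1 + C ((2 * r : ℂ) / (r + 1)) * (Rr r).2.2 := rfl

lemma Rr_succ_snd_snd (r : ℕ) : (Rr (r + 1)).2.2 = X 2 * (Rr r).1 := rfl

lemma Rr_fst_mem_Jr (r : ℕ) : (Rr r).1 ∈ Jr r := Ideal.subset_span (by simp)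

lemma Rr_snd_fst_mem_Jr (r : ℕ) : (Rr r).2.1 ∈ Jr r := Ideal.subset_span (by simp)

lemma Rr_snd_snd_mem_Jr (r : ℕ) : (Rr r).2.2 ∈ Jr r := Ideal.subset_span (by simp)

lemma Jr_succ_le (r : ℕ) : Jr (r + 1) ≤ Jr r := by
  rw [Jr, Ideal.span_le]
  rintro q (rfl | rfl | rfl)
  · exact add_mem (Ideal.mul_mem_left _ _ (Rr_fst_mem_Jr r))
      (Ideal.mul_mem_left _ _ (Rr_snd_fst_mem_Jr r))
  · exact add_mem (Ideal.mul_mem_left _ _ (Rr_fst_mem_Jr r))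
      (Ideal.mul_mem_left _ _ (Rr_snd_snd_mem_Jr r))
  · exact Ideal.mul_mem_left _ _ (Rr_fst_mem_Jr r)

lemma X_two_mul_Rr_fst_mem_Jr_succ (r : ℕ) : X 2 * (Rr r).1 ∈ Jr (r + 1) :=
  Rr_snd_snd_mem_Jr (r + 1)

lemma X_two_mul_Rr_snd_fst_mem_Jr_succ (r : ℕ) : X 2 * (Rr r).2.1 ∈ Jr (r + 1) := by
  rcases r with _ | r
  · simp [Rr]
  have hunit : IsUnit (C (((r + 1 : ℕ) : ℂ) ^ 2) : MvPolynomial (Fin 3) ℂ) :=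
    (IsUnit.mk0 _ (pow_ne_zero 2 (Nat.cast_ne_zero.mpr r.succ_ne_zero))).map C
  have hsolve : C (((r + 1 : ℕ) : ℂ) ^ 2) * (X 2 * (Rr (r + 1)).2.1) =
      X 2 * (Rr (r + 2)).1 - X 0 * (Rr (r + 2)).2.2 := by
    rw [Rr_succ_fst (r + 1), Rr_succ_snd_snd (r + 1)]
    ring
  rw [← Ideal.unit_mul_mem_iff_mem _ hunit, hsolve]
  exact sub_mem (Ideal.mul_mem_left _ _ (Rr_fst_mem_Jr _))
    (Ideal.mul_mem_left _ _ (Rr_snd_snd_mem_Jr _))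

lemma X_two_mul_Rr_snd_snd_mem_Jr_succ (r : ℕ) : X 2 * (Rr r).2.2 ∈ Jr (r + 1) := by
  rcases r with _ | r
  · simp [Rr]
  have hunit : IsUnit (C (2 * ((r + 1 : ℕ) : ℂ) / (((r + 1 : ℕ) : ℂ) + 1)) :
      MvPolynomial (Fin 3) ℂ) :=
    (IsUnit.mk0 _ (div_ne_zero (mul_ne_zero two_ne_zero (Nat.cast_ne_zero.mpr r.succ_ne_zero))
      (Nat.cast_add_one_ne_zero (r + 1)))).map C
  have hsolve : C (2 * ((r + 1 : ℕ) : ℂ) / (((r + 1 : ℕ) : ℂ) + 1)) * (X 2 * (Rr (r + 1)).2.2) =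
      X 2 * (Rr (r + 2)).2.1 - (X 1 + C ((-1 : ℂ) ^ (r + 2) * 8)) * (Rr (r + 2)).2.2 := by
    rw [Rr_succ_snd_fst (r + 1), Rr_succ_snd_snd (r + 1)]
    ring
  rw [← Ideal.unit_mul_mem_iff_mem _ hunit, hsolve]
  exact sub_mem (Ideal.mul_mem_left _ _ (Rr_snd_fst_mem_Jr _))
    (Ideal.mul_mem_left _ _ (Rr_snd_snd_mem_Jr _))

/-- For every r ≥ 0 one has the inclusions of ideals γ·J_r ⊆ J_{r+1} ⊆ J_r in ℂ[α,β,γ]. -/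
theorem stmt9 (r : ℕ) :
    (∀ p ∈ Jr r, X 2 * p ∈ Jr (r + 1)) ∧ Jr (r + 1) ≤ Jr r := by
  refine ⟨fun p hp => Ideal.mul_mem_of_mem_span ?_ hp, Jr_succ_le r⟩
  rintro q (rfl | rfl | rfl)
  · exact X_two_mul_Rr_fst_mem_Jr_succ r
  · exact X_two_mul_Rr_snd_fst_mem_Jr_succ r
  · exact X_two_mul_Rr_snd_snd_mem_Jr_succ r
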